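/- Let A be a ⊖-algebra with negation ¬a := 1 ⊖ a and a ⊕ b := ¬(¬a ⊖ b). Assume that ¬ is an involution (¬¬a = a for all a), that ⊕ is commutative, and that ⊖ is the right co-residual of ⊕ (a ≤ b ⊕ c if and only if a ⊖ c ≤ b, for all a, b, c). Then the following are equivalent: (1) a ∧ b = a ⊖ (a ⊖ b) for all a, b ∈ A; (2) for all prime ideals x, x', y of A with (x,y) ∈ dom(⋆): if there exists a prime ideal w with w ⊈ y, (x', w) ∈ dom(+), and x' + w ⊆ x ⋆ y, then x' ⊆ x. -/
import Mathlib


class OminusAlgebra (A : Type*) extends DistribLattice A, BoundedOrder A where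
  ominus : A → A → A
  inf_ominus : ∀ a b c : A, ominus (a ⊓ b) c = ominus a c ⊓ ominus b c
  sup_ominus : ∀ a b c : A, ominus (a ⊔ b) c = ominus a c ⊔ ominus b c
  ominus_inf : ∀ a b c : A, ominus a (b ⊓ c) = ominus a b ⊔ ominus a c
  ominus_sup : ∀ a b c : A, ominus a (b ⊔ c) = ominus a b ⊓ ominus a c
  bot_ominus : ∀ a : A, ominus ⊥ a = ⊥
  ominus_top : ∀ a : A, ominus a ⊤ = ⊥
  ominus_bot : ∀ a : A, ominus a ⊥ = a

infixl:65 " ⊖ " => OminusAlgebra.ominus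

variable {A : Type*} [OminusAlgebra A]

def oneg (a : A) : A := ⊤ ⊖ a

def oplus (a b : A) : A := oneg (oneg a ⊖ b)

def IsPrimeIdeal (x : Set A) : Prop :=
  x.Nonempty ∧ (∀ a b : A, a ≤ b → b ∈ x → a ∈ x) ∧
    (∀ a b : A, a ∈ x → b ∈ x → a ⊔ b ∈ x) ∧ x ≠ Set.univ ∧
    (∀ a b : A, a ⊓ b ∈ x → a ∈ x ∨ b ∈ x)

def ineg (x : Set A) : Set A := {a | oneg a ∉ x}

def domPlus (x y : Set A) : Prop := y ⊆ ineg x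

def pplus (x y : Set A) : Set A := {a | ∃ b ∈ y, a ⊖ b ∈ x}

def domStar (x y : Set A) : Prop := ¬ ineg x ⊆ y

def pstar (x y : Set A) : Set A := {a | ∀ b ∉ y, a ⊖ b ∈ x}

namespace StmtAux

open OminusAlgebra

/-! ### Basic consequences of the `⊖`-algebra axioms -/

lemma om_mono {a b : A} (h : a ≤ b) (c : A) : a ⊖ c ≤ b ⊖ c := by
  have hs := sup_ominus a b c
  rw [sup_eq_right.mpr h] at hs
  rw [hs]; exact le_sup_left

lemma om_anti (a : A) {b c : A} (h : b ≤ c) : a ⊖ c ≤ a ⊖ b := by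
  have hs := ominus_sup a b c
  rw [sup_eq_right.mpr h] at hs
  rw [hs]; exact inf_le_left

lemma om_le_self (a b : A) : a ⊖ b ≤ a := by
  have h := om_anti a (bot_le : (⊥ : A) ≤ b)
  rwa [ominus_bot] at h

lemma oneg_anti {a b : A} (h : a ≤ b) : oneg b ≤ oneg a := om_anti ⊤ h

lemma oneg_inf (a b : A) : oneg (a ⊓ b) = oneg a ⊔ oneg b := ominus_inf ⊤ a b

lemma oneg_sup (a b : A) : oneg (a ⊔ b) = oneg a ⊓ oneg b := ominus_sup ⊤ a b

lemma oneg_bot : oneg (⊥ : A) = ⊤ := ominus_bot ⊤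

lemma top_om (a : A) : ⊤ ⊖ a = oneg a := rfl

lemma le_of_oneg_le (hinv : ∀ a : A, oneg (oneg a) = a)
    {a b : A} (h : oneg a ≤ oneg b) : b ≤ a := by
  have h2 := oneg_anti h
  rwa [hinv, hinv] at h2

lemma oneg_oplus (hinv : ∀ a : A, oneg (oneg a) = a) (a b : A) :
    oneg (oplus a b) = oneg a ⊖ b := by
  unfold oplus; rw [hinv]

lemma oneg_om (hinv : ∀ a : A, oneg (oneg a) = a) (a b : A) :
    oneg (a ⊖ b) = oplus (oneg a) b := by
  unfold oplus; rw [hinv]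

lemma oplus_om_le (hres : ∀ a b c : A, a ≤ oplus b c ↔ a ⊖ c ≤ b) (a b : A) :
    (oplus a b) ⊖ b ≤ a := (hres (oplus a b) a b).mp le_rfl

lemma le_oplus_self (hres : ∀ a b c : A, a ≤ oplus b c ↔ a ⊖ c ≤ b) (a b : A) :
    a ≤ oplus a b := (hres a a b).mpr (om_le_self a b)

lemma le_om_oplus (hres : ∀ a b c : A, a ≤ oplus b c ↔ a ⊖ c ≤ b) (a b : A) :
    a ≤ oplus (a ⊖ b) b := (hres a (a ⊖ b) b).mpr le_rfl

lemma oplus_mono_left {a a' : A} (h : a ≤ a') (b : A) : oplus a b ≤ oplus a' b :=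
  oneg_anti (om_mono (oneg_anti h) b)

lemma oplus_mono_right (a : A) {b b' : A} (h : b ≤ b') : oplus a b ≤ oplus a b' :=
  oneg_anti (om_anti (oneg a) h)

lemma om_self (hinv : ∀ a : A, oneg (oneg a) = a)
    (hres : ∀ a b c : A, a ≤ oplus b c ↔ a ⊖ c ≤ b) (a : A) : a ⊖ a = (⊥ : A) := by
  have h1 : oplus ⊥ a = a := by
    unfold oplus
    rw [oneg_bot, top_om, hinv]
  have h2 := (hres a ⊥ a).mp (le_of_eq h1.symm)
  exact le_antisymm h2 bot_le

lemma oplus_top (hres : ∀ a b c : A, a ≤ oplus b c ↔ a ⊖ c ≤ b) (a : A) :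
    oplus a ⊤ = (⊤ : A) :=
  le_antisymm le_top ((hres ⊤ a ⊤).mpr (by rw [ominus_top]; exact bot_le))

lemma inf_oplus (hinv : ∀ a : A, oneg (oneg a) = a) (a b c : A) :
    oplus (a ⊓ b) c = oplus a c ⊓ oplus b c := by
  unfold oplus
  rw [oneg_inf, sup_ominus, ← oneg_sup]

lemma oplus_inf (a b c : A) : oplus a (b ⊓ c) = oplus a b ⊓ oplus a c := by
  unfold oplus
  rw [ominus_inf, ← oneg_sup]

lemma oneg_om_oneg (hinv : ∀ a : A, oneg (oneg a) = a)
    (hcomm : ∀ a b : A, oplus a b = oplus b a)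
    (hres : ∀ a b c : A, a ≤ oplus b c ↔ a ⊖ c ≤ b) (a b : A) :
    oneg a ⊖ oneg b = b ⊖ a := by
  have key : ∀ c : A, (oneg a ⊖ oneg b ≤ c ↔ b ⊖ a ≤ c) := by
    intro c
    rw [← hres (oneg a) c (oneg b), hcomm c (oneg b), hres (oneg a) (oneg b) c]
    constructor
    · intro h
      have h2 : b ≤ oneg (oneg a ⊖ c) := by
        rw [← hinv b]; exact oneg_anti h
      rw [oneg_om hinv, hinv, hcomm] at h2
      exact (hres b c a).mp h2
    · intro h
      have h2 : b ≤ oplus a c := by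
        rw [hcomm]; exact (hres b c a).mpr h
      rw [← hinv a, ← oneg_om hinv] at h2
      have h3 := oneg_anti h2
      rwa [hinv] at h3
  exact le_antisymm ((key _).mpr le_rfl) ((key _).mp le_rfl)

lemma oplus_om_om (hres : ∀ a b c : A, a ≤ oplus b c ↔ a ⊖ c ≤ b) (a e : A) :
    (oplus (a ⊖ e) e) ⊖ e = a ⊖ e :=
  le_antisymm (oplus_om_le hres _ _) (om_mono (le_om_oplus hres a e) e)

/-- The key inequality: if `f ⊓ ¬t ≤ e` then `(t ⊕ f) ⊖ e ≤ (t ⊕ e) ⊖ e`. -/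
lemma ineq1 (hinv : ∀ a : A, oneg (oneg a) = a)
    (hres : ∀ a b c : A, a ≤ oplus b c ↔ a ⊖ c ≤ b)
    {t e f : A} (h : f ⊓ oneg t ≤ e) : (oplus t f) ⊖ e ≤ (oplus t e) ⊖ e := by
  have h1 : oneg t ⊖ e ≤ oneg t ⊖ f := by
    have h2 : oneg t ⊖ e ≤ oneg t ⊖ (oneg t ⊓ f) := om_anti _ (by rwa [inf_comm] at h)
    rwa [ominus_inf, om_self hinv hres, bot_sup_eq] at h2
  have main : oneg (oplus ((oplus t e) ⊖ e) e) ≤ oneg (oplus t f) := by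
    rw [oneg_oplus hinv, oneg_oplus hinv]
    calc oneg ((oplus t e) ⊖ e) ⊖ e
        = (oplus (oneg (oplus t e)) e) ⊖ e := by rw [oneg_om hinv]
      _ = (oplus (oneg t ⊖ e) e) ⊖ e := by rw [oneg_oplus hinv]
      _ = oneg t ⊖ e := oplus_om_om hres _ _
      _ ≤ oneg t ⊖ f := h1
  exact (hres _ _ _).mp (le_of_oneg_le hinv main)

/-- Equivalence between condition (1) and the pointwise inequality `a ⊓ ¬e ≤ (a ⊕ e) ⊖ e`. -/
lemma cond_iff (hinv : ∀ a : A, oneg (oneg a) = a)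
    (hcomm : ∀ a b : A, oplus a b = oplus b a)
    (hres : ∀ a b c : A, a ≤ oplus b c ↔ a ⊖ c ≤ b) :
    (∀ a b : A, a ⊓ b = a ⊖ (a ⊖ b)) ↔ (∀ a e : A, a ⊓ oneg e ≤ (oplus a e) ⊖ e) := by
  constructor
  · intro h1 a e
    have D : ∀ u f : A, oplus (u ⊖ f) f ≤ u ⊔ f := by
      intro u f
      have h2 := h1 (oneg f) (oneg u)
      have h3 : oneg (oneg f ⊓ oneg u) = oneg (oneg f ⊖ (oneg f ⊖ oneg u)) := by rw [← h2]
      rw [oneg_inf, hinv, hinv, oneg_om hinv, hinv,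
        oneg_om_oneg hinv hcomm hres, hcomm] at h3
      rw [sup_comm] at h3
      exact le_of_eq h3.symm
    have main : oneg ((oplus a e) ⊖ e) ≤ oneg (a ⊓ oneg e) := by
      rw [oneg_om hinv, oneg_oplus hinv, oneg_inf, hinv]
      calc oplus (oneg a ⊖ e) e ≤ oneg a ⊔ e := D (oneg a) e
        _ = oneg a ⊔ e := rfl
    exact le_of_oneg_le hinv main
  · intro h2 a b
    have hle : a ⊖ (a ⊖ b) ≤ a ⊓ b := by
      refine le_inf (om_le_self a _) ?_
      have h3 : a ≤ oplus b (a ⊖ b) := by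
        rw [hcomm]; exact le_om_oplus hres a b
      exact (hres a b (a ⊖ b)).mp h3
    have D2 : ∀ u f : A, oplus (u ⊖ f) f ≤ u ⊔ f := by
      intro u f
      have h3 := h2 (oneg u) f
      rw [← oneg_sup] at h3
      have h4 : oneg (u ⊔ f) ≤ oneg (oplus (u ⊖ f) f) := by
        rw [oneg_oplus hinv]
        calc oneg (u ⊔ f) ≤ (oplus (oneg u) f) ⊖ f := h3
          _ = oneg (u ⊖ f) ⊖ f := by rw [← oneg_om hinv]
      exact le_of_oneg_le hinv h4
    have hge : a ⊓ b ≤ a ⊖ (a ⊖ b) := by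
      have main : oneg (a ⊖ (a ⊖ b)) ≤ oneg (a ⊓ b) := by
        rw [oneg_om hinv, oneg_inf, hcomm]
        calc oplus (a ⊖ b) (oneg a)
            = oplus (oneg b ⊖ oneg a) (oneg a) := by rw [oneg_om_oneg hinv hcomm hres]
          _ ≤ oneg b ⊔ oneg a := D2 (oneg b) (oneg a)
          _ = oneg a ⊔ oneg b := sup_comm _ _
      exact le_of_oneg_le hinv main
    exact le_antisymm hge hle

/-! ### Stone separation in set form -/

lemma stone {I F : Set A}
    (hIne : I.Nonempty) (hIlo : ∀ a b : A, a ≤ b → b ∈ I → a ∈ I)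
    (hIjoin : ∀ a b : A, a ∈ I → b ∈ I → a ⊔ b ∈ I)
    (hFne : F.Nonempty) (hFup : ∀ a b : A, a ≤ b → a ∈ F → b ∈ F)
    (hFinf : ∀ a b : A, a ∈ F → b ∈ F → a ⊓ b ∈ F)
    (hdisj : ∀ c ∈ F, c ∉ I) :
    ∃ J : Set A, IsPrimeIdeal J ∧ I ⊆ J ∧ ∀ c ∈ J, c ∉ F := by
  have hII : Order.IsIdeal I :=
    ⟨fun a b hba ha => hIlo b a hba ha, hIne,
      fun a ha b hb => ⟨a ⊔ b, hIjoin a b ha hb, le_sup_left, le_sup_right⟩⟩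
  have hFF : Order.IsPFilter F :=
    Order.IsPFilter.of_def hFne
      (fun a ha b hb => ⟨a ⊓ b, hFinf a b ha hb, inf_le_left, inf_le_right⟩)
      (fun h hm => hFup _ _ h hm)
  have hd : Disjoint (hFF.toPFilter : Set A) ((hII.toIdeal : Order.Ideal A) : Set A) := by
    rw [Set.disjoint_left]
    intro c hc hcI
    exact hdisj c hc hcI
  obtain ⟨J, hJp, hIJ, hdisjJ⟩ := DistribLattice.prime_ideal_of_disjoint_filter_ideal hd
  refine ⟨(J : Set A), ?_, ?_, ?_⟩
  · refine ⟨J.nonempty, fun a b hab hb => J.lower hab hb,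
      fun a b ha hb => J.sup_mem ha hb, hJp.toIsProper.ne_univ, fun a b hab => hJp.mem_or_mem hab⟩
  · exact hIJ
  · intro c hc hcF
    exact Set.disjoint_left.mp hdisjJ hcF hc

end StmtAux

open StmtAux OminusAlgebra

theorem stmt3 {A : Type*} [OminusAlgebra A]
    (hinv : ∀ a : A, oneg (oneg a) = a)
    (hcomm : ∀ a b : A, oplus a b = oplus b a)
    (hres : ∀ a b c : A, a ≤ oplus b c ↔ a ⊖ c ≤ b) :
    (∀ a b : A, a ⊓ b = a ⊖ (a ⊖ b)) ↔
    (∀ x x' y : Set A, IsPrimeIdeal x → IsPrimeIdeal x' → IsPrimeIdeal y →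
      domStar x y →
      (∃ w : Set A, IsPrimeIdeal w ∧ ¬ w ⊆ y ∧ domPlus x' w ∧ pplus x' w ⊆ pstar x y) →
      x' ⊆ x) := by
  constructor
  · -- (1) → (2)
    intro h1 x x' y hx hx' hy hds hw a ha
    obtain ⟨w, hw, hwny, hdp, hsub⟩ := hw
    obtain ⟨c0, hc0i, hc0y⟩ := Set.not_subset.mp hds
    obtain ⟨b0, hb0w, hb0y⟩ := Set.not_subset.mp hwny
    set e := b0 ⊓ c0 with he_def
    have he_w : e ∈ w := hw.2.1 e b0 inf_le_left hb0w
    have he_y : e ∉ y := fun h => (hy.2.2.2.2 b0 c0 h).elim hb0y hc0y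
    have hc : oplus a e ∈ pplus x' w :=
      ⟨e, he_w, hx'.2.1 _ a (oplus_om_le hres a e) ha⟩
    have hmem : (oplus a e) ⊖ e ∈ x := hsub hc e he_y
    have hCA : a ⊓ oneg e ≤ (oplus a e) ⊖ e := (cond_iff hinv hcomm hres).mp h1 a e
    have h3 : a ⊓ oneg e ∈ x := hx.2.1 _ _ hCA hmem
    have h4 : a ⊓ oneg c0 ∈ x := by
      refine hx.2.1 _ _ (inf_le_inf_left a (oneg_anti inf_le_right)) h3
    rcases hx.2.2.2.2 a (oneg c0) h4 with h | h
    · exact h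
    · exact absurd h hc0i
  · -- (2) → (1)
    intro h2
    rw [cond_iff hinv hcomm hres]
    intro a e
    by_contra hne
    set s := a ⊓ oneg e with hs_def
    set h := (oplus a e) ⊖ e with hh_def
    -- Step 1: prime ideal x with h ∈ x, s ∉ x
    obtain ⟨x, hx, hIx, hFx⟩ := stone (I := {c : A | c ≤ h}) (F := {c : A | s ≤ c})
      ⟨h, le_rfl⟩ (fun a b hab hb => le_trans hab hb) (fun a b ha hb => sup_le ha hb)
      ⟨s, le_rfl⟩ (fun a b hab ha => le_trans ha hab) (fun a b ha hb => le_inf ha hb)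
      (fun c hc hcI => hne (le_trans hc hcI))
    have hhx : h ∈ x := hIx le_rfl
    have hsx : s ∉ x := fun hm => hFx s hm le_rfl
    have hnegE : oneg e ∉ x := fun hm =>
      hFx _ (hx.2.1 s (oneg e) inf_le_right hm) le_rfl
    have hebot : e ≠ ⊥ := by
      intro hb
      apply hne
      rw [hs_def, hh_def, hb]
      have h5 : oplus a ⊥ = a := by
        unfold oplus; rw [ominus_bot, hinv]
      rw [ominus_bot, h5, oneg_bot]
      exact inf_le_left
    -- Step 2: prime ideal x' with s ∈ x', disjoint from Bα = {t | (t⊕e)⊖e ∉ x}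
    obtain ⟨x', hx', hIx', hFx'⟩ := stone (I := {c : A | c ≤ s})
      (F := {t : A | (oplus t e) ⊖ e ∉ x})
      ⟨s, le_rfl⟩ (fun a b hab hb => le_trans hab hb) (fun a b ha hb => sup_le ha hb)
      ⟨⊤, by
        simp only [Set.mem_setOf_eq]
        rw [le_antisymm le_top (le_oplus_self hres ⊤ e), top_om]
        exact hnegE⟩
      (fun t t' htt' ht => by
        simp only [Set.mem_setOf_eq] at ht ⊢
        intro hmem
        exact ht (hx.2.1 _ _ (om_mono (oplus_mono_left htt' e) e) hmem))
      (fun t t' ht ht' => by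
        simp only [Set.mem_setOf_eq] at ht ht' ⊢
        intro hmem
        rw [inf_oplus hinv, inf_ominus] at hmem
        exact (hx.2.2.2.2 _ _ hmem).elim ht ht')
      (fun c hc hcI => by
        simp only [Set.mem_setOf_eq] at hc hcI
        apply hc
        have h6 : (oplus c e) ⊖ e ≤ h := by
          rw [hh_def]
          exact om_mono (oplus_mono_left (le_trans hcI inf_le_left) e) e
        exact hx.2.1 _ _ h6 hhx)
    have hsx' : s ∈ x' := hIx' le_rfl
    have hBa : ∀ t ∈ x', (oplus t e) ⊖ e ∈ x := by
      intro t ht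
      by_contra hn
      exact hFx' t ht hn
    have hbotx' : (⊥ : A) ∈ x' := by
      obtain ⟨z, hz⟩ := hx'.1
      exact hx'.2.1 ⊥ z bot_le hz
    -- Step 3: prime ideal w with e ∈ w, disjoint from G
    obtain ⟨w, hw, hIw, hFw⟩ := stone (I := {c : A | c ≤ e})
      (F := {c : A | ∃ t ∈ x', ∃ b, (oplus t b) ⊖ e ∉ x ∧ b ⊓ oneg t ≤ c})
      ⟨e, le_rfl⟩ (fun a b hab hb => le_trans hab hb) (fun a b ha hb => sup_le ha hb)
      ⟨⊤, ⊥, hbotx', ⊤, by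
        rw [oplus_top hres, top_om]
        exact hnegE, le_top⟩
      (fun c c' hcc' hc => by
        obtain ⟨t, ht, b, hnb, hble⟩ := hc
        exact ⟨t, ht, b, hnb, le_trans hble hcc'⟩)
      (fun c1 c2 hc1 hc2 => by
        obtain ⟨t1, ht1, b1, hnb1, hble1⟩ := hc1
        obtain ⟨t2, ht2, b2, hnb2, hble2⟩ := hc2
        refine ⟨t1 ⊔ t2, hx'.2.2.1 t1 t2 ht1 ht2, b1 ⊓ b2, ?_, ?_⟩
        · rw [oplus_inf, inf_ominus]
          intro hmem
          rcases hx.2.2.2.2 _ _ hmem with hm | hm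
          · exact hnb1 (hx.2.1 _ _ (om_mono (oplus_mono_left le_sup_left b1) e) hm)
          · exact hnb2 (hx.2.1 _ _ (om_mono (oplus_mono_left le_sup_right b2) e) hm)
        · rw [oneg_sup]
          calc b1 ⊓ b2 ⊓ (oneg t1 ⊓ oneg t2)
              ≤ (b1 ⊓ oneg t1) ⊓ (b2 ⊓ oneg t2) := by
                refine le_inf (le_inf ?_ ?_) (le_inf ?_ ?_)
                · exact le_trans inf_le_left inf_le_left
                · exact le_trans inf_le_right inf_le_left
                · exact le_trans inf_le_left inf_le_right
                · exact le_trans inf_le_right inf_le_right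
            _ ≤ c1 ⊓ c2 := inf_le_inf hble1 hble2)
      (fun c hc hcI => by
        obtain ⟨t, ht, b, hnb, hble⟩ := hc
        apply hnb
        have h7 : (oplus t b) ⊖ e ≤ (oplus t e) ⊖ e :=
          ineq1 hinv hres (le_trans hble hcI)
        exact hx.2.1 _ _ h7 (hBa t ht))
    have hew : e ∈ w := hIw le_rfl
    have hdomPlus : ∀ b ∈ w, oneg b ∉ x' := by
      intro b hb hbneg
      refine hFw b hb ⟨oneg b, hbneg, ⊤, ?_, ?_⟩
      · rw [oplus_top hres, top_om]
        exact hnegE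
      · rw [hinv]
        exact inf_le_right
    have hKey : ∀ t ∈ x', ∀ b ∈ w, (oplus t b) ⊖ e ∈ x := by
      intro t ht b hb
      by_contra hn
      exact hFw b hb ⟨t, ht, b, hn, inf_le_left⟩
    have hKey2 : ∀ c ∈ pplus x' w, c ⊖ e ∈ x := by
      intro c hc
      obtain ⟨b, hb, hcb⟩ := hc
      have h8 : c ⊖ e ≤ (oplus (c ⊖ b) b) ⊖ e := om_mono (le_om_oplus hres c b) e
      exact hx.2.1 _ _ h8 (hKey (c ⊖ b) hcb b hb)
    -- Step 4: prime ideal y containing BAD ∪ {⊥}, disjoint from ↑e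
    obtain ⟨y, hy, hIy, hFy⟩ := stone
      (I := {d : A | d = ⊥ ∨ ∃ c ∈ pplus x' w, c ⊖ d ∉ x})
      (F := {c : A | e ≤ c})
      ⟨⊥, Or.inl rfl⟩
      (fun d' d hdd' hd => by
        rcases hd with hd | ⟨c, hc, hcd⟩
        · exact Or.inl (le_bot_iff.mp (hd ▸ hdd'))
        · refine Or.inr ⟨c, hc, fun hm => hcd (hx.2.1 _ _ (om_anti c hdd') hm)⟩)
      (fun d1 d2 hd1 hd2 => by
        rcases hd1 with hd1 | ⟨c1, hc1, hcd1⟩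
        · rwa [hd1, bot_sup_eq]
        rcases hd2 with hd2 | ⟨c2, hc2, hcd2⟩
        · rw [hd2, sup_bot_eq]
          exact Or.inr ⟨c1, hc1, hcd1⟩
        obtain ⟨b1, hb1, hc1b⟩ := hc1
        obtain ⟨b2, hb2, hc2b⟩ := hc2
        refine Or.inr ⟨c1 ⊔ c2, ⟨b1 ⊔ b2, hw.2.2.1 b1 b2 hb1 hb2, ?_⟩, ?_⟩
        · rw [sup_ominus]
          exact hx'.2.2.1 _ _
            (hx'.2.1 _ _ (om_anti c1 le_sup_left) hc1b)
            (hx'.2.1 _ _ (om_anti c2 le_sup_right) hc2b)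
        · rw [ominus_sup]
          intro hmem
          rcases hx.2.2.2.2 _ _ hmem with hm | hm
          · exact hcd1 (hx.2.1 _ _ (om_mono le_sup_left d1) hm)
          · exact hcd2 (hx.2.1 _ _ (om_mono le_sup_right d2) hm))
      ⟨e, le_rfl⟩ (fun a b hab ha => le_trans ha hab) (fun a b ha hb => le_inf ha hb)
      (fun c hc hcI => by
        simp only [Set.mem_setOf_eq] at hc hcI
        rcases hcI with hcI | ⟨c', hc', hcd⟩
        · exact hebot (le_bot_iff.mp (hcI ▸ hc))
        · exact hcd (hx.2.1 _ _ (om_anti c' hc) (hKey2 c' hc')))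
    have hey : e ∉ y := fun hm => hFy e hm le_rfl
    -- Apply hypothesis (2)
    have happ : x' ⊆ x := by
      refine h2 x x' y hx hx' hy ?_ ⟨w, hw, ?_, ?_, ?_⟩
      · intro hsubset
        exact hey (hsubset hnegE)
      · intro hsub
        exact hey (hsub hew)
      · intro b hb
        exact hdomPlus b hb
      · intro c hc d hd
        by_contra hn
        exact hd (hIy (Or.inr ⟨c, hc, hn⟩))
    exact hsx (happ hsx')
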